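/- Uniqueness of rational functions from power sums: if R₁ and R₂ are rational functions in one complex variable, both monic quotients of monic polynomials, such that for every k ∈ ℕ the sum of the k-th powers of the zeros of R₁ (with multiplicity) minus the sum of the k-th powers of its poles equals the corresponding quantity for R₂, and the zeros and poles of both lie in a common disk, then R₁ = R₂. -/

import Mathlib

/-!
Clearing denominators, the hypothesis says that the multisets of roots of `P₁ Q₂` and `P₂ Q₁`
have the same power sums. By linearity they then have the same sums of `f(z)` for every
polynomial `f`, and taking for `f` a Lagrange basis polynomial of the common support isolates the
multiplicity of each point, so the two multisets coincide. Over `ℂ` a monic polynomial is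
determined by its roots, hence `P₁ Q₂ = P₂ Q₁`, and coprimality forces `P₁ = P₂`, `Q₁ = Q₂`.
-/

open Polynomial

namespace Multiset

variable {K : Type*}

theorem sum_map_eval_eq_of_sum_map_pow_eq [CommSemiring K] {s t : Multiset K}
    (h : ∀ k : ℕ, (s.map (· ^ k)).sum = (t.map (· ^ k)).sum) (f : K[X]) :
    (s.map f.eval).sum = (t.map f.eval).sum := by
  simp only [eval_eq_sum_range, sum_map_sum, sum_map_mul_left]
  exact Finset.sum_congr rfl fun k _ => by rw [h k]

theorem eq_of_sum_map_pow_eq [Field K] [CharZero K] {s t : Multiset K}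
    (h : ∀ k : ℕ, (s.map (· ^ k)).sum = (t.map (· ^ k)).sum) : s = t := by
  classical
  ext a
  set T := insert a (s + t).toFinset
  set f := Lagrange.basis T id a
  have hf : ∀ z ∈ s + t, z ≠ a → f.eval z = 0 := fun z hz hza =>
    Lagrange.eval_basis_of_ne (v := id) (Ne.symm hza) (Finset.mem_insert_of_mem (by simpa using hz))
  have hfa : f.eval a = 1 := Lagrange.eval_basis_self (Set.injOn_id _) (Finset.mem_insert_self a _)
  have key := sum_map_eval_eq_of_sum_map_pow_eq h f
  rwa [sum_map_eq_nsmul_single a fun z hza hz => hf z (mem_add.2 (.inl hz)) hza,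
    sum_map_eq_nsmul_single a fun z hza hz => hf z (mem_add.2 (.inr hz)) hza,
    hfa, nsmul_one, nsmul_one, Nat.cast_inj] at key

end Multiset

namespace Polynomial

theorem eq_of_monic_of_roots_eq {k : Type*} [Field k] [IsAlgClosed k] {p q : k[X]}
    (hp : p.Monic) (hq : q.Monic) (h : p.roots = q.roots) : p = q :=
  eq_of_monic_of_associated hp hq
    ((IsAlgClosed.associated_iff_roots_eq_roots hp.ne_zero hq.ne_zero).2 h)

theorem Monic.eq_and_eq_of_mul_eq_mul_of_isCoprime {R : Type*} [CommRing R] [IsDomain R]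
    {p₁ q₁ p₂ q₂ : R[X]} (hp₁ : p₁.Monic) (hp₂ : p₂.Monic) (hc₁ : IsCoprime p₁ q₁)
    (hc₂ : IsCoprime p₂ q₂) (h : p₁ * q₂ = p₂ * q₁) : p₁ = p₂ ∧ q₁ = q₂ := by
  have hp : p₁ = p₂ := eq_of_monic_of_associated hp₁ hp₂ <| associated_of_dvd_dvd
    (hc₁.dvd_of_dvd_mul_right ⟨q₂, h.symm⟩) (hc₂.dvd_of_dvd_mul_right ⟨q₁, h⟩)
  refine ⟨hp, (mul_left_cancel₀ hp₁.ne_zero ?_).symm⟩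
  rw [h, hp]

end Polynomial

theorem stmt7_general (P₁ Q₁ P₂ Q₂ : Polynomial ℂ)
    (h₁ : P₁.Monic) (h₂ : Q₁.Monic) (h₃ : P₂.Monic) (h₄ : Q₂.Monic)
    (hc₁ : IsCoprime P₁ Q₁) (hc₂ : IsCoprime P₂ Q₂)
    (hpow : ∀ k : ℕ,
      (P₁.roots.map (· ^ k)).sum - (Q₁.roots.map (· ^ k)).sum =
      (P₂.roots.map (· ^ k)).sum - (Q₂.roots.map (· ^ k)).sum) :
    P₁ = P₂ ∧ Q₁ = Q₂ := by
  have hroots : (P₁ * Q₂).roots = (P₂ * Q₁).roots := by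
    rw [roots_mul (h₁.mul h₄).ne_zero, roots_mul (h₃.mul h₂).ne_zero]
    refine Multiset.eq_of_sum_map_pow_eq fun k => ?_
    simp only [Multiset.map_add, Multiset.sum_add]
    linear_combination hpow k
  exact h₁.eq_and_eq_of_mul_eq_mul_of_isCoprime h₃ hc₁ hc₂
    (eq_of_monic_of_roots_eq (h₁.mul h₄) (h₃.mul h₂) hroots)

/-- **Uniqueness of monic rational functions from power sums of zeros and poles.**
If `P₁/Q₁` and `P₂/Q₂` are quotients of monic coprime polynomials over `ℂ`, all of
whose roots lie in a common disk `{|z| < R}`, and if for every `k ∈ ℕ` (including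
`k = 0`) the sum of the `k`-th powers of the zeros (with multiplicity) minus that
of the poles agree, then `P₁ = P₂` and `Q₁ = Q₂`. -/
theorem stmt7 (R : ℝ) (P₁ Q₁ P₂ Q₂ : Polynomial ℂ)
    (h₁ : P₁.Monic) (h₂ : Q₁.Monic) (h₃ : P₂.Monic) (h₄ : Q₂.Monic)
    (hc₁ : IsCoprime P₁ Q₁) (hc₂ : IsCoprime P₂ Q₂)
    (hroots : ∀ z : ℂ, (P₁.IsRoot z ∨ Q₁.IsRoot z ∨ P₂.IsRoot z ∨ Q₂.IsRoot z) →
      ‖z‖ < R)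
    (hpow : ∀ k : ℕ,
      (P₁.roots.map (· ^ k)).sum - (Q₁.roots.map (· ^ k)).sum =
      (P₂.roots.map (· ^ k)).sum - (Q₂.roots.map (· ^ k)).sum) :
    P₁ = P₂ ∧ Q₁ = Q₂ :=
  stmt7_general P₁ Q₁ P₂ Q₂ h₁ h₂ h₃ h₄ hc₁ hc₂ hpow
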